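/- Let k ≥ 1 and let e_1, …, e_k be integers. In the ring of 2×2 integer matrices set M_i = [[0,−1],[1,−e_i]] for 1 ≤ i ≤ k−1, and let G′ = [[0,1],[1,−e_k]] · M_{k−1} · M_{k−2} ⋯ M_1 (so G′ = [[0,1],[1,−e_1]] when k = 1). Then det G′ = −1 and the entries of G′ are given explicitly by G′ = [[(−1)^k Q_{k−1}, (−1)^{k+1} P_{k−1}],[(−1)^{k+1} Q_k, (−1)^k P_k]], where P, Q are the Hirzebruch–Jung sequences of (e_1, …, e_k). (This is the gluing-matrix computation of Lemma 'bamboo', case 2: writing G′ = [[a,b],[c,d]], it encodes that −d/c equals the negative continued fraction [e_1, …, e_k].) -/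

import Mathlib

/-- Hirzebruch–Jung numerator sequence, shifted so that `hjP e (j+1) = P_j`
(`P_{-1} = 0`, `P_0 = 1`, `P_j = e_j P_{j-1} - P_{j-2}`). -/
def hjP (e : ℕ → ℤ) : ℕ → ℤ
  | 0 => 0
  | 1 => 1
  | n + 2 => e (n + 1) * hjP e (n + 1) - hjP e n

/-- Hirzebruch–Jung denominator sequence, shifted so that `hjQ e (j+1) = Q_j`
(`Q_{-1} = -1`, `Q_0 = 0`, `Q_j = e_j Q_{j-1} - Q_{j-2}`). -/
def hjQ (e : ℕ → ℤ) : ℕ → ℤ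
  | 0 => -1
  | 1 => 0
  | n + 2 => e (n + 1) * hjQ e (n + 1) - hjQ e n

/-- The matrix `M_i = [[0,-1],[1,-e_i]]`. -/
def bambooM (e : ℕ → ℤ) (i : ℕ) : Matrix (Fin 2) (Fin 2) ℤ := !![0, -1; 1, -(e i)]

/-- The product `M_k * M_{k-1} * ⋯ * M_1` (empty product for `k = 0`). -/
def bambooProd (e : ℕ → ℤ) : ℕ → Matrix (Fin 2) (Fin 2) ℤ
  | 0 => 1
  | k + 1 => bambooM e (k + 1) * bambooProd e k

/-! The gluing matrix `[[0,1],[1,-e_k]] * M_{k-1} ⋯ M_1` is `diag(-1, 1) * M_k ⋯ M_1`, so both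
claims reduce to the product `M_k ⋯ M_1`: it has determinant `1` since every `M_i` does, and
its columns satisfy the Hirzebruch–Jung recurrence, which identifies its entries with
`± P_j, ± Q_j`. -/

theorem det_bambooM (e : ℕ → ℤ) (i : ℕ) : (bambooM e i).det = 1 := by
  simp [bambooM, Matrix.det_fin_two_of]

theorem det_bambooProd (e : ℕ → ℤ) (k : ℕ) : (bambooProd e k).det = 1 := by
  induction k with
  | zero => exact Matrix.det_one
  | succ k ih => rw [bambooProd, Matrix.det_mul, det_bambooM, ih, one_mul]

theorem bambooProd_eq (e : ℕ → ℤ) (k : ℕ) :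
    bambooProd e k =
      !![(-1 : ℤ) ^ (k + 1) * hjQ e k, (-1 : ℤ) ^ k * hjP e k;
         (-1 : ℤ) ^ (k + 1) * hjQ e (k + 1), (-1 : ℤ) ^ k * hjP e (k + 1)] := by
  induction k with
  | zero => simp [bambooProd, hjP, hjQ, Matrix.one_fin_two]
  | succ k ih =>
    rw [bambooProd, ih, bambooM, Matrix.mul_fin_two, hjP, hjQ]
    ext i j
    fin_cases i <;> fin_cases j <;> simp [pow_succ] <;> ring

theorem gluing_eq_diag_mul_bambooProd (e : ℕ → ℤ) (k : ℕ) :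
    !![0, 1; 1, -(e (k + 1))] * bambooProd e k = !![-1, 0; 0, 1] * bambooProd e (k + 1) := by
  rw [bambooProd, bambooM, ← mul_assoc, Matrix.mul_fin_two]
  norm_num

/-- Lemma "bamboo", case 2: the gluing matrix
`G' = [[0,1],[1,-e_k]] * M_{k-1} * ⋯ * M_1` has determinant `-1` and its entries
are given by the Hirzebruch–Jung sequences of `(e_1, …, e_k)`. -/
theorem bamboo_case2 (k : ℕ) (hk : 1 ≤ k) (e : ℕ → ℤ) :
    ((!![0, 1; 1, -(e k)] : Matrix (Fin 2) (Fin 2) ℤ) * bambooProd e (k - 1)).det = -1 ∧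
    (!![0, 1; 1, -(e k)] : Matrix (Fin 2) (Fin 2) ℤ) * bambooProd e (k - 1) =
      !![(-1 : ℤ) ^ k * hjQ e k,           (-1 : ℤ) ^ (k + 1) * hjP e k;
         (-1 : ℤ) ^ (k + 1) * hjQ e (k + 1), (-1 : ℤ) ^ k * hjP e (k + 1)] := by
  obtain ⟨m, rfl⟩ := Nat.exists_eq_add_of_le' hk
  rw [Nat.add_sub_cancel, gluing_eq_diag_mul_bambooProd]
  constructor
  · rw [Matrix.det_mul, det_bambooProd, Matrix.det_fin_two_of]
    norm_num
  · rw [bambooProd_eq, Matrix.mul_fin_two]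
    ext i j
    fin_cases i <;> fin_cases j <;> simp [pow_succ]
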